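/- arXiv:2109.15148 — 6 statements merged into one kernel-verified Lean document; each statement's English description precedes it below -/
import Mathlib

section
/- For every prime p with p ≡ 5 (mod 6) and p > 11, and for all x, y, z, t ∈ S, the following hold in F_p: x + y ≠ 0, x + y + z + t ≠ 0, x + 5y ≠ 0, and x² + x·y + y² ≠ 0. -/
/-- The set `S ⊆ F_p` of elements whose least nonnegative representative `k`
satisfies `1 ≤ k ≤ (p-5)/6` and `k ≡ 1 (mod 3)`. -/
def Svertex (p : ℕ) : Set (ZMod p) :=
  {x | 1 ≤ x.val ∧ x.val ≤ (p - 5) / 6 ∧ x.val % 3 = 1}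

/-!
Every element of `S` has representative at most `(p - 5) / 6`, so the three linear forms
evaluate to integers in `(0, p)` and cannot vanish mod `p`. For the quadratic form, note
`x ^ 3 - y ^ 3 = (x - y) (x ^ 2 + x y + y ^ 2)`; since `3 ∤ p - 1`, cubing is injective on
`F_p`, so a zero of the form forces `x = y` and then `3 y ^ 2 = 0`, impossible for `y ≠ 0`.
-/

theorem ZMod.natCast_ne_zero_of_pos_of_lt {p n : ℕ} (hn : 0 < n) (hnp : n < p) :
    (n : ZMod p) ≠ 0 := by
  rw [Ne, ZMod.natCast_eq_zero_iff]
  exact fun h => (Nat.le_of_dvd hn h).not_gt hnp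

section FiniteGroupWithZero

variable {K : Type*} [GroupWithZero K] [Fintype K]

theorem FiniteField.pow_two_mul_card_sub_one (a : K) :
    a ^ (2 * Fintype.card K - 1) = a := by
  have hsplit : 2 * Fintype.card K - 1 = Fintype.card K + (Fintype.card K - 1) := by
    have := Fintype.card_pos (α := K)
    omega
  rw [hsplit, pow_add, FiniteField.pow_card, ← pow_succ', Nat.sub_add_cancel Fintype.card_pos,
    FiniteField.pow_card]

theorem FiniteField.pow_three_injective (hq : Fintype.card K % 3 = 2) :
    Function.Injective (fun a : K => a ^ 3) := by
  have h3 : 3 * ((2 * Fintype.card K - 1) / 3) = 2 * Fintype.card K - 1 := by omega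
  intro a b hab
  calc a = (a ^ 3) ^ ((2 * Fintype.card K - 1) / 3) := by
        rw [← pow_mul, h3, FiniteField.pow_two_mul_card_sub_one]
    _ = (b ^ 3) ^ ((2 * Fintype.card K - 1) / 3) := congrArg (· ^ _) hab
    _ = b := by rw [← pow_mul, h3, FiniteField.pow_two_mul_card_sub_one]

end FiniteGroupWithZero

section FiniteField

variable {K : Type*} [Field K] [Fintype K]

theorem FiniteField.three_ne_zero (hq : Fintype.card K % 3 = 2) : (3 : K) ≠ 0 := by
  intro h3
  have hcard : ((3 * (Fintype.card K / 3) + 2 : ℕ) : K) = 0 := by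
    rw [← FiniteField.cast_card_eq_zero K]
    congr 1
    omega
  push_cast at hcard
  rw [h3, zero_mul, zero_add] at hcard
  have : (3 : K) = 1 := by
    rw [show (3 : K) = 2 + 1 by norm_num, hcard, zero_add]
  exact one_ne_zero (this ▸ h3)

theorem FiniteField.sq_add_mul_add_sq_ne_zero (hq : Fintype.card K % 3 = 2) {x y : K}
    (hy : y ≠ 0) : x ^ 2 + x * y + y ^ 2 ≠ 0 := by
  intro h
  have hcube : x ^ 3 = y ^ 3 := by
    rw [← sub_eq_zero, show x ^ 3 - y ^ 3 = (x - y) * (x ^ 2 + x * y + y ^ 2) by ring, h,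
      mul_zero]
  obtain rfl : x = y := FiniteField.pow_three_injective hq hcube
  have h3y : (3 : K) * x ^ 2 = 0 := by rw [← h]; ring
  exact mul_ne_zero (FiniteField.three_ne_zero hq) (pow_ne_zero 2 hy) h3y

end FiniteField

theorem stmt_0_general (p : ℕ) (hp : p.Prime) (h5 : p % 6 = 5)
    (x y z t : ZMod p) (hx : x ∈ Svertex p) (hy : y ∈ Svertex p)
    (hz : z ∈ Svertex p) (ht : t ∈ Svertex p) :
    x + y ≠ 0 ∧ x + y + z + t ≠ 0 ∧ x + 5 * y ≠ 0 ∧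
      x ^ 2 + x * y + y ^ 2 ≠ 0 := by
  have : Fact p.Prime := ⟨hp⟩
  obtain ⟨hx1, hx2, -⟩ := hx
  obtain ⟨hy1, hy2, -⟩ := hy
  obtain ⟨hz1, hz2, -⟩ := hz
  obtain ⟨ht1, ht2, -⟩ := ht
  have hlin (n : ℕ) (hn : 0 < n) (hnp : n ≤ p - 5) : (n : ZMod p) ≠ 0 :=
    ZMod.natCast_ne_zero_of_pos_of_lt hn (by omega)
  refine ⟨?_, ?_, ?_, ?_⟩
  · simpa using hlin (x.val + y.val) (by omega) (by omega)
  · simpa using hlin (x.val + y.val + z.val + t.val) (by omega) (by omega)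
  · simpa using hlin (x.val + 5 * y.val) (by omega) (by omega)
  · have hy0 : y ≠ 0 := by
      rintro rfl
      simp at hy1
    exact FiniteField.sq_add_mul_add_sq_ne_zero (by rw [ZMod.card]; omega) hy0

theorem stmt_0 (p : ℕ) (hp : p.Prime) (h5 : p % 6 = 5) (h11 : 11 < p)
    (x y z t : ZMod p) (hx : x ∈ Svertex p) (hy : y ∈ Svertex p)
    (hz : z ∈ Svertex p) (ht : t ∈ Svertex p) :
    x + y ≠ 0 ∧ x + y + z + t ≠ 0 ∧ x + 5 * y ≠ 0 ∧
      x ^ 2 + x * y + y ^ 2 ≠ 0 :=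
  stmt_0_general p hp h5 x y z t hx hy hz ht
end

section
/- If x and y are distinct vertices of G_p that have a common neighbour (i.e., there exists u ∈ V adjacent in G_p to both x and y), then x₁ ≠ y₁, x₂ ≠ y₂, and x₃ ≠ y₃. -/
/-- The vertex set `V = S × F_p × F_p` of the graph `G_p`. -/
def Vsub (p : ℕ) : Type :=
  {v : ZMod p × ZMod p × ZMod p // v.1 ∈ Svertex p}

/-- The graph `G_p` on `V = S × F_p × F_p`: distinct vertices `x, y` are adjacent iff
`x₂ + y₃ = x₁·y₁²` and `x₃ + y₂ = x₁²·y₁`. -/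
def Gp (p : ℕ) : SimpleGraph (Vsub p) where
  Adj x y := x ≠ y ∧ x.val.2.1 + y.val.2.2 = x.val.1 * y.val.1 ^ 2 ∧
    x.val.2.2 + y.val.2.1 = x.val.1 ^ 2 * y.val.1
  symm := ⟨by
    rintro x y ⟨hne, h1, h2⟩
    exact ⟨hne.symm, by linear_combination h2, by linear_combination h1⟩⟩
  loopless := ⟨by rintro x ⟨h, -⟩; exact h rfl⟩

def IsGpAdj {R : Type*} [CommRing R] (u x : R × R × R) : Prop :=
  u.2.1 + x.2.2 = u.1 * x.1 ^ 2 ∧ u.2.2 + x.2.1 = u.1 ^ 2 * x.1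

namespace IsGpAdj

variable {R : Type*} [CommRing R] {u x y : R × R × R}

theorem eq_of_fst_eq (hx : IsGpAdj u x) (hy : IsGpAdj u y) (h : x.1 = y.1) : x = y := by
  obtain ⟨hx₃, hx₂⟩ := hx
  obtain ⟨hy₃, hy₂⟩ := hy
  refine Prod.ext h (Prod.ext ?_ ?_)
  · linear_combination hx₂ - hy₂ + u.1 ^ 2 * h
  · linear_combination hx₃ - hy₃ + u.1 * (x.1 + y.1) * h

variable [NoZeroDivisors R]

theorem fst_eq_of_snd_fst_eq (hx : IsGpAdj u x) (hy : IsGpAdj u y) (hu : u.1 ≠ 0)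
    (h : x.2.1 = y.2.1) : x.1 = y.1 := by
  have : u.1 ^ 2 * (x.1 - y.1) = 0 := by linear_combination hy.2 - hx.2 + h
  exact sub_eq_zero.mp ((mul_eq_zero.mp this).resolve_left (pow_ne_zero 2 hu))

theorem fst_eq_or_eq_neg_of_snd_snd_eq (hx : IsGpAdj u x) (hy : IsGpAdj u y) (hu : u.1 ≠ 0)
    (h : x.2.2 = y.2.2) : x.1 = y.1 ∨ x.1 = -y.1 := by
  have : u.1 * (x.1 ^ 2 - y.1 ^ 2) = 0 := by linear_combination hy.1 - hx.1 + h
  exact sq_eq_sq_iff_eq_or_eq_neg.mp (sub_eq_zero.mp ((mul_eq_zero.mp this).resolve_left hu))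

end IsGpAdj

theorem Gp_adj_iff {p : ℕ} {u x : Vsub p} : (Gp p).Adj u x ↔ u ≠ x ∧ IsGpAdj u.val x.val :=
  Iff.rfl

namespace Svertex

variable {p : ℕ} {a b : ZMod p}

theorem ne_zero (ha : a ∈ Svertex p) : a ≠ 0 := by
  rintro rfl
  simp [Svertex] at ha

theorem add_ne_zero [NeZero p] (ha : a ∈ Svertex p) (hb : b ∈ Svertex p) : a + b ≠ 0 := by
  obtain ⟨ha₁, ha₂, -⟩ := ha
  obtain ⟨-, hb₂, -⟩ := hb
  have hlt : a.val + b.val < p := by omega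
  rw [← ZMod.val_ne_zero, ZMod.val_add_of_lt hlt]
  omega

end Svertex

theorem stmt_1_general (p : ℕ) (hp : p.Prime)
    (x y : Vsub p) (hxy : x ≠ y) (u : Vsub p)
    (hux : (Gp p).Adj u x) (huy : (Gp p).Adj u y) :
    x.val.1 ≠ y.val.1 ∧ x.val.2.1 ≠ y.val.2.1 ∧ x.val.2.2 ≠ y.val.2.2 := by
  have : Fact p.Prime := ⟨hp⟩
  obtain ⟨-, hx⟩ := Gp_adj_iff.mp hux
  obtain ⟨-, hy⟩ := Gp_adj_iff.mp huy
  have hu : u.val.1 ≠ 0 := Svertex.ne_zero u.property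
  have h₁ : x.val.1 ≠ y.val.1 := fun h => hxy (Subtype.ext (hx.eq_of_fst_eq hy h))
  refine ⟨h₁, fun h => h₁ (hx.fst_eq_of_snd_fst_eq hy hu h), fun h => ?_⟩
  rcases hx.fst_eq_or_eq_neg_of_snd_snd_eq hy hu h with h' | h'
  · exact h₁ h'
  · exact Svertex.add_ne_zero x.property y.property (by rw [h', neg_add_cancel])

theorem stmt_1 (p : ℕ) (hp : p.Prime) (h5 : p % 6 = 5) (h11 : 11 < p)
    (x y : Vsub p) (hxy : x ≠ y) (u : Vsub p)
    (hux : (Gp p).Adj u x) (huy : (Gp p).Adj u y) :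
    x.val.1 ≠ y.val.1 ∧ x.val.2.1 ≠ y.val.2.1 ∧ x.val.2.2 ≠ y.val.2.2 :=
  stmt_1_general p hp x y hxy u hux huy
end

section
/- Let a, u, v, w, b, z, y, x be pairwise distinct vertices of G_q such that au, uv, vw, wb, bz, zy, yx, xa are all edges of G_q (so they form an 8-cycle). Then a₁ + b₁ = v₁ + y₁ and u₁ + z₁ = x₁ + w₁ in F_q. -/
/-!
Summing the edge equations around the 8-cycle with alternating signs, the last three coordinates
telescope away and leave three polynomial relations among the first coordinates alone. Since a
neighbour is determined by its first coordinate, distinct vertices with a common neighbour have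
distinct first coordinates, and these non-vanishing differences let one solve the relations for
`a₁ + b₁ - v₁ - y₁`. Rotating the cycle by one step turns this into `u₁ + z₁ = x₁ + w₁`.
-/

/-- The graph `G_q` on `F_q⁴`: distinct vertices `u, v` are adjacent iff
`u₂ + v₂ = u₁·v₁`, `u₃ + v₄ = u₁·v₁²` and `u₄ + v₃ = u₁²·v₁`. -/
def Gq (F : Type*) [Field F] : SimpleGraph (F × F × F × F) where
  Adj u v := u ≠ v ∧ u.2.1 + v.2.1 = u.1 * v.1 ∧
    u.2.2.1 + v.2.2.2 = u.1 * v.1 ^ 2 ∧ u.2.2.2 + v.2.2.1 = u.1 ^ 2 * v.1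
  symm := ⟨by
    rintro u v ⟨hne, h1, h2, h3⟩
    exact ⟨hne.symm, by linear_combination h1, by linear_combination h3,
      by linear_combination h2⟩⟩
  loopless := ⟨fun u h => h.1 rfl⟩

theorem add_eq_add_of_alternating_relations {F : Type*} [Field F] {a u v w b z y x : F}
    (h₁ : a * u - u * v + v * w - w * b + b * z - z * y + y * x - x * a = 0)
    (h₂ : a * u ^ 2 - u ^ 2 * v + v * w ^ 2 - w ^ 2 * b + b * z ^ 2 - z ^ 2 * y + y * x ^ 2
      - x ^ 2 * a = 0)
    (h₃ : a ^ 2 * u - u * v ^ 2 + v ^ 2 * w - w * b ^ 2 + b ^ 2 * z - z * y ^ 2 + y ^ 2 * x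
      - x * a ^ 2 = 0)
    (hva : v ≠ a) (hxu : x ≠ u) (hwu : w ≠ u) : a + b = v + y := by
  have key : (a + b - (v + y)) * ((v - a) * (x - u) * (w - u)) = 0 := by
    linear_combination
      (-(y - a) * (z - u) - (y - a) * (w - u) + (b - a) * (x - u) + (b - a) * (z - u)
        - (v - a) * (w - u) - 2 * u * (y - b) - 2 * a * (w - x)) * h₁
      + (y - b) * h₂ + (w - x) * h₃
  have hne : (v - a) * (x - u) * (w - u) ≠ 0 := by
    simp only [ne_eq, mul_eq_zero, sub_eq_zero, not_or]
    exact ⟨⟨hva, hxu⟩, hwu⟩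
  linear_combination (mul_eq_zero.1 key).resolve_right hne

namespace Gq

variable {F : Type*} [Field F]

theorem fst_ne_of_adj_of_adj {P Q R : F × F × F × F} (hPQ : (Gq F).Adj P Q)
    (hPR : (Gq F).Adj P R) (hQR : Q ≠ R) : Q.1 ≠ R.1 := by
  intro h
  obtain ⟨-, e₁, e₂, e₃⟩ := hPQ
  obtain ⟨-, f₁, f₂, f₃⟩ := hPR
  apply hQR
  have h₁ : Q.2.1 = R.2.1 := by linear_combination e₁ - f₁ + P.1 * h
  have h₂ : Q.2.2.1 = R.2.2.1 := by linear_combination e₃ - f₃ + P.1 ^ 2 * h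
  have h₃ : Q.2.2.2 = R.2.2.2 := by linear_combination e₂ - f₂ + P.1 * (Q.1 + R.1) * h
  exact Prod.ext h (Prod.ext h₁ (Prod.ext h₂ h₃))

theorem cycle_fst_relations {a u v w b z y x : F × F × F × F}
    (hau : (Gq F).Adj a u) (huv : (Gq F).Adj u v) (hvw : (Gq F).Adj v w)
    (hwb : (Gq F).Adj w b) (hbz : (Gq F).Adj b z) (hzy : (Gq F).Adj z y)
    (hyx : (Gq F).Adj y x) (hxa : (Gq F).Adj x a) :
    a.1 * u.1 - u.1 * v.1 + v.1 * w.1 - w.1 * b.1 + b.1 * z.1 - z.1 * y.1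
        + y.1 * x.1 - x.1 * a.1 = 0 ∧
      a.1 * u.1 ^ 2 - u.1 ^ 2 * v.1 + v.1 * w.1 ^ 2 - w.1 ^ 2 * b.1 + b.1 * z.1 ^ 2
        - z.1 ^ 2 * y.1 + y.1 * x.1 ^ 2 - x.1 ^ 2 * a.1 = 0 ∧
      a.1 ^ 2 * u.1 - u.1 * v.1 ^ 2 + v.1 ^ 2 * w.1 - w.1 * b.1 ^ 2 + b.1 ^ 2 * z.1
        - z.1 * y.1 ^ 2 + y.1 ^ 2 * x.1 - x.1 * a.1 ^ 2 = 0 :=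
  ⟨by linear_combination -hau.2.1 + huv.2.1 - hvw.2.1 + hwb.2.1 - hbz.2.1 + hzy.2.1
      - hyx.2.1 + hxa.2.1,
    by linear_combination -hau.2.2.1 + huv.2.2.2 - hvw.2.2.1 + hwb.2.2.2 - hbz.2.2.1
      + hzy.2.2.2 - hyx.2.2.1 + hxa.2.2.2,
    by linear_combination -hau.2.2.2 + huv.2.2.1 - hvw.2.2.2 + hwb.2.2.1 - hbz.2.2.2
      + hzy.2.2.1 - hyx.2.2.2 + hxa.2.2.1⟩

theorem fst_add_fst_eq_of_cycle {a u v w b z y x : F × F × F × F}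
    (hau : (Gq F).Adj a u) (huv : (Gq F).Adj u v) (hvw : (Gq F).Adj v w)
    (hwb : (Gq F).Adj w b) (hbz : (Gq F).Adj b z) (hzy : (Gq F).Adj z y)
    (hyx : (Gq F).Adj y x) (hxa : (Gq F).Adj x a) (hav : a ≠ v) (huw : u ≠ w) (hux : u ≠ x) :
    a.1 + b.1 = v.1 + y.1 :=
  have ⟨h₁, h₂, h₃⟩ := cycle_fst_relations hau huv hvw hwb hbz hzy hyx hxa
  add_eq_add_of_alternating_relations h₁ h₂ h₃
    (fst_ne_of_adj_of_adj huv hau.symm hav.symm)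
    (fst_ne_of_adj_of_adj hxa.symm hau hux.symm)
    (fst_ne_of_adj_of_adj hvw huv.symm huw.symm)

end Gq

theorem stmt_11_general (F : Type*) [Field F]
    (a u v w b z y x : F × F × F × F)
    (hdist : [a, u, v, w, b, z, y, x].Pairwise (· ≠ ·))
    (hau : (Gq F).Adj a u) (huv : (Gq F).Adj u v) (hvw : (Gq F).Adj v w)
    (hwb : (Gq F).Adj w b) (hbz : (Gq F).Adj b z) (hzy : (Gq F).Adj z y)
    (hyx : (Gq F).Adj y x) (hxa : (Gq F).Adj x a) :
    a.1 + b.1 = v.1 + y.1 ∧ u.1 + z.1 = x.1 + w.1 := by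
  obtain ⟨ha, hu, hv, -⟩ : (∀ c ∈ [u, v, w, b, z, y, x], a ≠ c) ∧
      (∀ c ∈ [v, w, b, z, y, x], u ≠ c) ∧ (∀ c ∈ [w, b, z, y, x], v ≠ c) ∧ _ := by
    simpa only [List.pairwise_cons] using hdist
  refine ⟨Gq.fst_add_fst_eq_of_cycle hau huv hvw hwb hbz hzy hyx hxa
    (ha v (by simp)) (hu w (by simp)) (hu x (by simp)), ?_⟩
  have := Gq.fst_add_fst_eq_of_cycle huv hvw hwb hbz hzy hyx hxa hau
    (hu w (by simp)) (hv b (by simp)) (ha v (by simp)).symm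
  linear_combination this

theorem stmt_11 (F : Type*) [Field F] [Fintype F] (hodd : Odd (Fintype.card F))
    (a u v w b z y x : F × F × F × F)
    (hdist : [a, u, v, w, b, z, y, x].Pairwise (· ≠ ·))
    (hau : (Gq F).Adj a u) (huv : (Gq F).Adj u v) (hvw : (Gq F).Adj v w)
    (hwb : (Gq F).Adj w b) (hbz : (Gq F).Adj b z) (hzy : (Gq F).Adj z y)
    (hyx : (Gq F).Adj y x) (hxa : (Gq F).Adj x a) :
    a.1 + b.1 = v.1 + y.1 ∧ u.1 + z.1 = x.1 + w.1 :=
  stmt_11_general F a u v w b z y x hdist hau huv hvw hwb hbz hzy hyx hxa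
end

section
/- There exist a constant c > 0 and n₀ such that for every n ≥ n₀ there exists a simple graph on n vertices containing no copy of the theta graph θ_{4,3} that has at least c·n^{5/4} edges; that is, ex(n, θ_{4,3}) = Ω(n^{5/4}). -/
/-- The theta graph `θ_{4,3}`: two endpoints (`Sum.inl 0` and `Sum.inl 1`) joined by
three internally disjoint paths of length 4; vertex `Sum.inr (i, j)` is the `j`-th
internal vertex of the `i`-th path. -/
def thetaFourThree : SimpleGraph (Fin 2 ⊕ Fin 3 × Fin 3) :=
  SimpleGraph.fromRel (fun u v =>
    match u, v with
    | Sum.inl a, Sum.inr ij => (a = 0 ∧ ij.2 = 0) ∨ (a = 1 ∧ ij.2 = 2)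
    | Sum.inr ij, Sum.inr ij' => ij.1 = ij'.1 ∧ ij'.2 = ij.2 + 1 ∧ ij.2 ≠ 2
    | _, _ => False)

/-- `G` contains a copy of `H`. -/
def ContainsCopy {α β : Type*} (G : SimpleGraph α) (H : SimpleGraph β) : Prop :=
  ∃ f : β → α, Function.Injective f ∧ ∀ u v, H.Adj u v → G.Adj (f u) (f v)

/-!
Points and lines are both vectors of `F⁴` over a field of characteristic `≠ 2`, the point `p`
lying on the line `l` when `l₁ = p₁ + p₀l₀`, `l₂ = p₂ + p₀l₁` and `l₃ = p₃ + p₀l₀²`. Each point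
lies on exactly one line of every slope `l₀`, so for `|F| = q` the incidence graph has `2q⁴`
vertices and `q⁵` edges.

The geometry is self-dual, so a copy of `θ_{4,3}` may be assumed to join two points `a` and `b`
by three arms `a – l – r – m – b`. For an arm put `u = a₀ - r₀`, `v = b₀ - r₀`, `t = l₀ - m₀`;
these are nonzero, and both `uvt` and `uvt²` are functions of `a` and `b` alone. Hence so are
`uv` and `t`, which in turn determine the arm from `r₀`. Thus the three values `r₀` are distinct
roots of the quadratic `(a₀ - x)(b₀ - x) = uv`, which is absurd. Bertrand's postulate provides a
prime `q` with `2q⁴ ≤ n ≤ 32q⁴`.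
-/

open SimpleGraph Function

theorem funext_fin_four {α : Type*} {p q : Fin 4 → α} (h0 : p 0 = q 0) (h1 : p 1 = q 1)
    (h2 : p 2 = q 2) (h3 : p 3 = q 3) : p = q := by
  funext i; fin_cases i <;> assumption

theorem containsCopy_iff_isContained {α β : Type*} {G : SimpleGraph α} {H : SimpleGraph β} :
    ContainsCopy G H ↔ H ⊑ G :=
  ⟨fun ⟨f, hf, hadj⟩ => ⟨⟨⟨f, hadj _ _⟩, hf⟩⟩,
    fun ⟨c⟩ => ⟨c, c.injective, fun _ _ => c.toHom.map_adj⟩⟩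

theorem ncard_edgeSet_le_of_isContained {α β : Type*} [Finite β] {A : SimpleGraph α}
    {B : SimpleGraph β} (h : A ⊑ B) :
    A.edgeSet.ncard ≤ B.edgeSet.ncard := by
  obtain ⟨c⟩ := h
  exact Nat.card_le_card_of_injective _ c.mapEdgeSet.injective

theorem isContained_of_isContained_map {V W X : Type*} {G : SimpleGraph V} {H : SimpleGraph X}
    (hH : ∀ x, ∃ y, H.Adj x y) (f : V ↪ W) (h : H ⊑ G.map f) : H ⊑ G := by
  obtain ⟨c⟩ := h
  have hrange : ∀ x, ∃ v, f v = c x := fun x => by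
    obtain ⟨y, hxy⟩ := hH x
    obtain ⟨v, -, -, hv, -⟩ := (map_adj f G _ _).1 (c.toHom.map_adj hxy)
    exact ⟨v, hv⟩
  choose g hg using hrange
  refine ⟨⟨⟨g, fun {x y} hxy => ?_⟩, fun x y hxy => c.injective ?_⟩⟩
  · have := c.toHom.map_adj hxy
    rwa [Copy.toHom_apply, Copy.toHom_apply, ← hg x, ← hg y, map_adj_apply] at this
  · rw [Copy.toHom_apply, Copy.toHom_apply, ← hg x, ← hg y]
    exact congrArg f hxy

theorem thetaFourThree_exists_adj (u : Fin 2 ⊕ Fin 3 × Fin 3) :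
    ∃ v, thetaFourThree.Adj u v := by
  rcases u with (a | ⟨i, j⟩)
  · fin_cases a
    · exact ⟨.inr (0, 0), by simp [thetaFourThree]⟩
    · exact ⟨.inr (0, 2), by simp [thetaFourThree]⟩
  · fin_cases j
    · exact ⟨.inl 0, by simp [thetaFourThree]⟩
    · exact ⟨.inr (i, 0), by simp [thetaFourThree]⟩
    · exact ⟨.inl 1, by simp [thetaFourThree]⟩

section IncidenceGraph

variable {α β : Type*} (R : α → β → Prop)

def incidenceGraph : SimpleGraph (α ⊕ β) where
  Adj
    | .inl p, .inr l => R p l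
    | .inr l, .inl p => R p l
    | _, _ => False
  symm := ⟨by rintro (p | l) (q | m) h <;> exact h⟩
  loopless := ⟨by rintro (p | l) h <;> exact h⟩

variable {R}

@[simp]
theorem incidenceGraph_adj_inl_inr {p : α} {l : β} :
    (incidenceGraph R).Adj (.inl p) (.inr l) ↔ R p l := Iff.rfl

@[simp]
theorem incidenceGraph_adj_inr_inl {p : α} {l : β} :
    (incidenceGraph R).Adj (.inr l) (.inl p) ↔ R p l := Iff.rfl

theorem incidenceGraph_adj_inl_iff {p : α} {x : α ⊕ β} :
    (incidenceGraph R).Adj (.inl p) x ↔ ∃ l, x = .inr l ∧ R p l := by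
  rcases x with q | l
  · exact iff_of_false (fun h => h) (by simp)
  · simp

theorem incidenceGraph_adj_inr_iff {l : β} {x : α ⊕ β} :
    (incidenceGraph R).Adj (.inr l) x ↔ ∃ p, x = .inl p ∧ R p l := by
  rw [adj_comm]
  rcases x with p | m
  · simp
  · exact iff_of_false (fun h => h) (by simp)

theorem exists_copy_apply_eq_inl {X : Type*} {H : SimpleGraph X} {φ : α → β} {ψ : β → α}
    (hφ : Injective φ) (hψ : Injective ψ) (hR : ∀ p l, R p l → R (ψ l) (φ p))
    (c : Copy H (incidenceGraph R)) (x : X) :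
    ∃ (c' : Copy H (incidenceGraph R)) (p : α), c' x = .inl p := by
  rcases hx : c x with p | l
  · exact ⟨c, p, hx⟩
  let σ : Copy (incidenceGraph R) (incidenceGraph R) :=
    ⟨⟨Sum.elim (Sum.inr ∘ φ) (Sum.inl ∘ ψ), fun {x y} h => by
      rcases x with p | l <;> rcases y with q | m
      exacts [h.elim, hR _ _ h, hR _ _ h, h.elim]⟩,
      (Sum.inr_injective.comp hφ).sumElim (Sum.inl_injective.comp hψ) (by simp)⟩
  exact ⟨σ.comp c, ψ l, by simp [Copy.comp_apply, hx, σ]⟩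

end IncidenceGraph

section Field

variable {F : Type*} [Field F]

theorem eq_and_eq_of_mul_eq_of_mul_sq_eq {X X' t t' : F} (h1 : X * t = X' * t')
    (h2 : X * t ^ 2 = X' * t' ^ 2) (h : X * t ≠ 0) : X = X' ∧ t = t' := by
  have ht : t = t' := by
    have : X' * t' * (t - t') = 0 := by linear_combination t * h1.symm + h2
    linear_combination (mul_eq_zero.1 this).resolve_left (h1 ▸ h)
  subst ht
  exact ⟨mul_right_cancel₀ (right_ne_zero_of_mul h) h1, rfl⟩

theorem eq_of_moments_eq (h2 : (2 : F) ≠ 0) {u v L M L' M' : F} (hu : u ≠ 0)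
    (ht : L - M ≠ 0) (h1 : u * L - v * M = u * L' - v * M')
    (hsq : u * L ^ 2 - v * M ^ 2 = u * L' ^ 2 - v * M' ^ 2) (hdiff : L - M = L' - M') : L = L' := by
  by_contra hne
  have hδ : L - L' ≠ 0 := sub_ne_zero.2 hne
  have huv : u = v := by
    have : (u - v) * (L - L') = 0 := by linear_combination h1 - v * hdiff
    linear_combination (mul_eq_zero.1 this).resolve_right hδ
  subst huv
  have hsum : L + L' - (M + M') = 0 := by
    have : u * (L - L') * (L + L' - (M + M')) = 0 := by
      linear_combination hsq - u * (M + M') * hdiff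
    exact (mul_eq_zero.1 this).resolve_left (mul_ne_zero hu hδ)
  exact ht (by linear_combination (mul_eq_zero.1 (show (2 : F) * (L - M) = 0 by
    linear_combination hsum + hdiff)).resolve_left h2)

end Field

namespace ThetaFreeGeometry

variable {F : Type*} [Field F]

def Inc (p l : Fin 4 → F) : Prop :=
  l 1 = p 1 + p 0 * l 0 ∧ l 2 = p 2 + p 0 * l 1 ∧ l 3 = p 3 + p 0 * l 0 ^ 2

theorem Inc.sub {p q l : Fin 4 → F} (hp : Inc p l) (hq : Inc q l) :
    (p 0 - q 0) * l 0 = q 1 - p 1 ∧ (p 0 - q 0) * l 1 = q 2 - p 2 ∧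
      (p 0 - q 0) * l 0 ^ 2 = q 3 - p 3 := by
  obtain ⟨hp1, hp2, hp3⟩ := hp
  obtain ⟨hq1, hq2, hq3⟩ := hq
  exact ⟨by linear_combination hq1 - hp1, by linear_combination hq2 - hp2,
    by linear_combination hq3 - hp3⟩

theorem Inc.eq_of_fst_eq {p q l : Fin 4 → F} (hp : Inc p l) (hq : Inc q l) (h : p 0 = q 0) :
    p = q := by
  obtain ⟨h1, h2, h3⟩ := hp.sub hq
  rw [h, sub_self, zero_mul, eq_comm, sub_eq_zero] at h1 h2 h3
  exact funext_fin_four h h1.symm h2.symm h3.symm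

theorem Inc.line_eq_of_fst_eq {p l l' : Fin 4 → F} (hl : Inc p l) (hl' : Inc p l')
    (h : l 0 = l' 0) : l = l' := by
  obtain ⟨h1, h2, h3⟩ := hl
  obtain ⟨h1', h2', h3'⟩ := hl'
  have e1 : l 1 = l' 1 := by rw [h1, h1', h]
  have e2 : l 2 = l' 2 := by rw [h2, h2', e1]
  have e3 : l 3 = l' 3 := by rw [h3, h3', h]
  exact funext_fin_four h e1 e2 e3

def dualPoint (l : Fin 4 → F) : Fin 4 → F := ![l 0, -l 1, l 0 * l 1 - l 3, -l 2]

def dualLine (p : Fin 4 → F) : Fin 4 → F := ![p 0, -p 1, -p 3, -p 2 - p 0 * p 1]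

theorem Inc.dual {p l : Fin 4 → F} (h : Inc p l) : Inc (dualPoint l) (dualLine p) := by
  obtain ⟨h1, h2, h3⟩ := h
  refine ⟨?_, ?_, ?_⟩ <;> simp only [dualPoint, dualLine, Matrix.cons_val]
  · linear_combination h1
  · linear_combination h3 - l 0 * h1
  · linear_combination h2 + p 0 * h1

theorem dualPoint_injective : Injective (dualPoint (F := F)) := by
  intro l l' h
  have h0 := congrFun h 0
  have h1 := congrFun h 1
  have h2 := congrFun h 2
  have h3 := congrFun h 3
  simp only [dualPoint, Matrix.cons_val] at h0 h1 h2 h3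
  exact funext_fin_four h0 (by linear_combination -h1) (by linear_combination -h3)
    (by linear_combination -h2 + l 1 * h0 - l' 0 * h1)

theorem dualLine_injective : Injective (dualLine (F := F)) := by
  intro p p' h
  have h0 := congrFun h 0
  have h1 := congrFun h 1
  have h2 := congrFun h 2
  have h3 := congrFun h 3
  simp only [dualLine, Matrix.cons_val] at h0 h1 h2 h3
  exact funext_fin_four h0 (by linear_combination -h1)
    (by linear_combination -h3 - p 1 * h0 + p' 0 * h1) (by linear_combination -h2)

def lineThrough (a : Fin 4 → F) (t : F) : Fin 4 → F :=
  ![t, a 1 + a 0 * t, a 2 + a 0 * (a 1 + a 0 * t), a 3 + a 0 * t ^ 2]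

theorem inc_lineThrough (a : Fin 4 → F) (t : F) : Inc a (lineThrough a t) := by
  simp [Inc, lineThrough]

structure Arm (a b : Fin 4 → F) where
  l : Fin 4 → F
  r : Fin 4 → F
  m : Fin 4 → F
  inc_a : Inc a l
  inc_rl : Inc r l
  inc_rm : Inc r m
  inc_b : Inc b m
  r_ne_a : r ≠ a
  r_ne_b : r ≠ b
  l_ne_m : l ≠ m

namespace Arm

variable {a b : Fin 4 → F} (A : Arm a b)

theorem a_sub_r_ne_zero : a 0 - A.r 0 ≠ 0 :=
  sub_ne_zero.2 fun h => A.r_ne_a (A.inc_rl.eq_of_fst_eq A.inc_a h.symm)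

theorem b_sub_r_ne_zero : b 0 - A.r 0 ≠ 0 :=
  sub_ne_zero.2 fun h => A.r_ne_b (A.inc_rm.eq_of_fst_eq A.inc_b h.symm)

theorem l_sub_m_ne_zero : A.l 0 - A.m 0 ≠ 0 :=
  sub_ne_zero.2 fun h => A.l_ne_m (A.inc_rl.line_eq_of_fst_eq A.inc_rm h)

theorem moments :
    (a 0 - A.r 0) * A.l 0 - (b 0 - A.r 0) * A.m 0 = b 1 - a 1 ∧
    (a 0 - A.r 0) * A.l 0 ^ 2 - (b 0 - A.r 0) * A.m 0 ^ 2 = b 3 - a 3 ∧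
    (a 0 - A.r 0) * (a 1 + a 0 * A.l 0) - (b 0 - A.r 0) * (b 1 + b 0 * A.m 0) = b 2 - a 2 := by
  obtain ⟨ha1, ha2, ha3⟩ := A.inc_a.sub A.inc_rl
  obtain ⟨hb1, hb2, hb3⟩ := A.inc_b.sub A.inc_rm
  refine ⟨by linear_combination ha1 - hb1, by linear_combination ha3 - hb3, ?_⟩
  rw [← A.inc_a.1, ← A.inc_b.1]
  linear_combination ha2 - hb2

theorem invariants :
    (a 0 - A.r 0) * (b 0 - A.r 0) * (A.l 0 - A.m 0) =
        (b 1 - a 1) * a 0 + (a 0 - b 0) * a 1 - (b 2 - a 2) ∧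
    (a 0 - A.r 0) * (b 0 - A.r 0) * (A.l 0 - A.m 0) ^ 2 =
        (b 1 - a 1) ^ 2 - (b 3 - a 3) * (a 0 - b 0) := by
  obtain ⟨e1, e2, e3⟩ := A.moments
  constructor
  · linear_combination (a 0 + b 0 - A.r 0) * e1 - e3
  · rw [← e1, ← e2]; ring

theorem prod_eq_and_sub_eq (A B : Arm a b) :
    (a 0 - A.r 0) * (b 0 - A.r 0) = (a 0 - B.r 0) * (b 0 - B.r 0) ∧
      A.l 0 - A.m 0 = B.l 0 - B.m 0 := by
  obtain ⟨hA1, hA2⟩ := A.invariants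
  obtain ⟨hB1, hB2⟩ := B.invariants
  exact eq_and_eq_of_mul_eq_of_mul_sq_eq (hA1.trans hB1.symm) (hA2.trans hB2.symm)
    (hA1 ▸ mul_ne_zero (mul_ne_zero A.a_sub_r_ne_zero A.b_sub_r_ne_zero) A.l_sub_m_ne_zero)

theorem r_eq_of_r_fst_eq (h2 : (2 : F) ≠ 0) (A B : Arm a b) (h : A.r 0 = B.r 0) : A.r = B.r := by
  obtain ⟨hA1, hA2, -⟩ := A.moments
  obtain ⟨hB1, hB2, -⟩ := B.moments
  rw [h] at hA1 hA2
  have hL := eq_of_moments_eq h2 (h ▸ A.a_sub_r_ne_zero) A.l_sub_m_ne_zero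
    (hA1.trans hB1.symm) (hA2.trans hB2.symm) (A.prod_eq_and_sub_eq B).2
  have hl := A.inc_a.line_eq_of_fst_eq B.inc_a hL
  exact A.inc_rl.eq_of_fst_eq (hl ▸ B.inc_rl) h

theorem r_fst_add_r_fst (A B : Arm a b) (h : A.r 0 ≠ B.r 0) : A.r 0 + B.r 0 = a 0 + b 0 := by
  have : (A.r 0 - B.r 0) * (A.r 0 + B.r 0 - (a 0 + b 0)) = 0 := by
    linear_combination (A.prod_eq_and_sub_eq B).1
  linear_combination (mul_eq_zero.1 this).resolve_left (sub_ne_zero.2 h)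

end Arm

theorem not_three_arms (h2 : (2 : F) ≠ 0) {a b : Fin 4 → F} (A : Fin 3 → Arm a b)
    (hA : Function.Injective fun i => (A i).r) : False := by
  have hne : ∀ i j, i ≠ j → (A i).r 0 ≠ (A j).r 0 := fun i j hij h =>
    hij (hA (Arm.r_eq_of_r_fst_eq h2 _ _ h))
  have h01 := Arm.r_fst_add_r_fst _ _ (hne 0 1 (by decide))
  have h02 := Arm.r_fst_add_r_fst _ _ (hne 0 2 (by decide))
  exact hne 1 2 (by decide) (by linear_combination h01 - h02)

theorem exists_arms {a : Fin 4 → F} (c : Copy thetaFourThree (incidenceGraph (Inc (F := F))))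
    (ha : c (.inl 0) = .inl a) : ∃ b, ∃ A : Fin 3 → Arm a b, Injective fun i => (A i).r := by
  have adj : ∀ {u v}, thetaFourThree.Adj u v → (incidenceGraph Inc).Adj (c u) (c v) :=
    c.toHom.map_adj
  have arm : ∀ i : Fin 3, ∃ l r m, c (.inr (i, 0)) = .inr l ∧ c (.inr (i, 1)) = .inl r ∧
      c (.inr (i, 2)) = .inr m ∧ Inc a l ∧ Inc r l ∧ Inc r m := by
    intro i
    have h0 := adj (u := .inl 0) (v := .inr (i, 0)) (by simp [thetaFourThree])
    rw [ha] at h0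
    obtain ⟨l, hl, hal⟩ := incidenceGraph_adj_inl_iff.1 h0
    have h1 := adj (u := .inr (i, 0)) (v := .inr (i, 1)) (by simp [thetaFourThree])
    rw [hl] at h1
    obtain ⟨r, hr, hrl⟩ := incidenceGraph_adj_inr_iff.1 h1
    have h2 := adj (u := .inr (i, 1)) (v := .inr (i, 2)) (by simp [thetaFourThree])
    rw [hr] at h2
    obtain ⟨m, hm, hrm⟩ := incidenceGraph_adj_inl_iff.1 h2
    exact ⟨l, r, m, hl, hr, hm, hal, hrl, hrm⟩
  choose l r m hl hr hm hal hrl hrm using arm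
  have hend : ∀ i : Fin 3, (incidenceGraph Inc).Adj (.inr (m i)) (c (.inl 1)) := fun i => by
    rw [← hm i]; exact adj (by simp [thetaFourThree])
  obtain ⟨b, hb, -⟩ := incidenceGraph_adj_inr_iff.1 (hend 0)
  have hbm : ∀ i, Inc b (m i) := fun i => by simpa [hb] using hend i
  have hc : ∀ {u v}, c u = c v → u = v := fun h => c.injective h
  refine ⟨b, fun i => ⟨l i, r i, m i, hal i, hrl i, hrm i, hbm i, ?_, ?_, ?_⟩, fun i j hij => ?_⟩
  · rintro rfl
    exact Sum.inr_ne_inl (hc ((hr i).trans ha.symm))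
  · rintro rfl
    exact Sum.inr_ne_inl (hc ((hr i).trans hb.symm))
  · intro h
    have := hc ((hl i).trans (h ▸ (hm i).symm))
    simp at this
  · have hij : r i = r j := hij
    have := hc ((hr i).trans (hij ▸ (hr j).symm))
    simpa using this

theorem thetaFourThree_free (h2 : (2 : F) ≠ 0) :
    thetaFourThree.Free (incidenceGraph (Inc (F := F))) := by
  rintro ⟨c⟩
  obtain ⟨c, a, ha⟩ := exists_copy_apply_eq_inl dualLine_injective dualPoint_injective
    (fun _ _ => Inc.dual) c (.inl 0)
  obtain ⟨b, A, hA⟩ := exists_arms c ha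
  exact not_three_arms h2 A hA

theorem card_pow_five_le_ncard_edgeSet [Fintype F] :
    Fintype.card F ^ 5 ≤ (incidenceGraph (Inc (F := F))).edgeSet.ncard := by
  let e : (Fin 4 → F) × F → (incidenceGraph (Inc (F := F))).edgeSet := fun x =>
    ⟨s(.inl x.1, .inr (lineThrough x.1 x.2)), inc_lineThrough x.1 x.2⟩
  have he : Injective e := by
    rintro ⟨a, t⟩ ⟨a', t'⟩ h
    obtain ⟨ha, hl⟩ | ⟨h, -⟩ := Sym2.eq_iff.1 (congrArg Subtype.val h)
    · cases Sum.inl_injective ha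
      rw [Prod.mk.injEq]
      exact ⟨rfl, congrFun (Sum.inr_injective hl) 0⟩
    · exact absurd h Sum.inl_ne_inr
  have := Nat.card_le_card_of_injective e he
  simpa [Nat.card_eq_fintype_card, Fintype.card_prod, Fintype.card_fun, ← pow_succ] using this

end ThetaFreeGeometry

theorem exists_prime_pow_four_bounds {n : ℕ} (hn : 512 ≤ n) :
    ∃ p, p.Prime ∧ p ≠ 2 ∧ 2 * p ^ 4 ≤ n ∧ n ≤ 32 * p ^ 4 := by
  set m := Nat.nthRoot 4 (n / 2)
  have hm : m ^ 4 ≤ n / 2 := Nat.pow_nthRoot_le_iff.2 (Or.inl (by norm_num))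
  have hm' : n / 2 < (m + 1) ^ 4 := Nat.lt_pow_nthRoot_add_one (by norm_num) _
  have h4 : 4 ≤ m := (Nat.le_nthRoot_iff (by norm_num)).2 (by omega)
  obtain ⟨p, hp, hlt, hle⟩ := Nat.exists_prime_lt_and_le_two_mul (m / 2) (by omega)
  refine ⟨p, hp, by omega, ?_, ?_⟩
  · have : p ^ 4 ≤ m ^ 4 := Nat.pow_le_pow_left (by omega) 4
    omega
  · have : (m + 1) ^ 4 ≤ (2 * p) ^ 4 := Nat.pow_le_pow_left (by omega) 4
    rw [mul_pow] at this
    omega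

theorem rpow_five_div_four_le {x y : ℝ} (hx : 0 ≤ x) (hy : 0 ≤ y) (h : x ≤ y ^ 4) :
    x ^ (5 / 4 : ℝ) ≤ y ^ 5 :=
  calc x ^ (5 / 4 : ℝ) ≤ (y ^ 4) ^ (5 / 4 : ℝ) := Real.rpow_le_rpow hx h (by norm_num)
    _ = y ^ 5 := by rw [← Real.rpow_natCast, ← Real.rpow_mul hy]; norm_num

theorem stmt_13 :
    ∃ c : ℝ, 0 < c ∧ ∃ n0 : ℕ, ∀ n : ℕ, n0 ≤ n →
      ∃ G : SimpleGraph (Fin n), ¬ ContainsCopy G thetaFourThree ∧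
        c * (n : ℝ) ^ ((5 : ℝ) / 4) ≤ (G.edgeSet.ncard : ℝ) := by
  refine ⟨1 / 1024, by norm_num, 512, fun n hn => ?_⟩
  obtain ⟨p, hp, hp2, hlow, hhigh⟩ := exists_prime_pow_four_bounds hn
  have : Fact p.Prime := ⟨hp⟩
  set G := incidenceGraph (ThetaFreeGeometry.Inc (F := ZMod p))
  have hfree : thetaFourThree.Free G :=
    ThetaFreeGeometry.thetaFourThree_free (Ring.two_ne_zero (by rwa [ZMod.ringChar_zmod_n]))
  obtain ⟨ι⟩ : Nonempty ((Fin 4 → ZMod p) ⊕ (Fin 4 → ZMod p) ↪ Fin n) :=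
    Function.Embedding.nonempty_of_card_le (by simpa [ZMod.card, ← two_mul] using hlow)
  refine ⟨G.map ι, fun h => hfree (isContained_of_isContained_map thetaFourThree_exists_adj ι
    (containsCopy_iff_isContained.1 h)), ?_⟩
  have hn : (n : ℝ) ≤ (4 * p) ^ 4 := by norm_cast; rw [mul_pow]; norm_num; omega
  calc (1 / 1024 : ℝ) * n ^ ((5 : ℝ) / 4) ≤ 1 / 1024 * (4 * p) ^ 5 := by
        gcongr; exact rpow_five_div_four_le (by positivity) (by positivity) hn
    _ = (Fintype.card (ZMod p) ^ 5 : ℕ) := by simp [ZMod.card]; ring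
    _ ≤ G.edgeSet.ncard := by exact_mod_cast ThetaFreeGeometry.card_pow_five_le_ncard_edgeSet
    _ ≤ (G.map ι).edgeSet.ncard := by
        exact_mod_cast ncard_edgeSet_le_of_isContained (Embedding.map ι G).isContained
end

section
/- For every prime p, all x₁, x₂, x₃, y₁, y₂, y₃ ∈ S₁, and all a, b ∈ F_p \ {0}: if the three-element sets e(x₁,x₂,x₃,a) and e(y₁,y₂,y₃,b) have at least two elements in common, then (x₁,x₂,x₃,a) = (y₁,y₂,y₃,b), and hence e(x₁,x₂,x₃,a) = e(y₁,y₂,y₃,b). Consequently the hypergraph H is linear: any two distinct edges of H share at most one vertex. -/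
/-!
Each edge `e(x₁, x₂, x₃, a)` has exactly one vertex in each part `Vᵢ`, so two shared vertices lie
in different parts `Vᵢ`, `Vⱼ`. Their first coordinates give two of the `xₖ`, and the second and
third coordinates of one of them give `c z + a = c z' + b` and `c² z + a = c² z' + b` for the
third variable, with `c` one of the two already known. Subtracting, `c (c - 1) (z - z') = 0`,
and `c ∉ {0, 1}` forces `z = z'` and then `a = b`.
-/

/-- The conditions required of the set `S₁ ⊆ F_p`. -/
def S1Cond (p : ℕ) (S1 : Set (ZMod p)) : Prop :=
  ∀ x ∈ S1,
    (2 ≤ x.val ∧ x.val ≤ (p - 1) / 2) ∧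
    (∀ w : ZMod p, x ≠ -w ^ 2) ∧
    x ^ 2 - 4 * x + 1 ≠ 0 ∧
    3 * x ≠ 1 ∧ 3 * x ≠ 2 ∧
    10872 * x ^ 5 - 12757 * x ^ 4 + 3369 * x ^ 3 + 2312 * x ^ 2
      - 1176 * x - 144 ≠ 0

/-- `S₂ = F_p \ {0, 1}`. -/
def S2set (p : ℕ) : Set (ZMod p) := {x | x ≠ 0 ∧ x ≠ 1}

/-- The part `V_i = S₁ × S₂ × S₂ × {i}` of the vertex set. -/
def Vpart (p : ℕ) (S1 : Set (ZMod p)) (i : ℕ) : Set (ZMod p × ZMod p × ZMod p × ℕ) :=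
  {v | v.1 ∈ S1 ∧ v.2.1 ∈ S2set p ∧ v.2.2.1 ∈ S2set p ∧ v.2.2.2 = i}

/-- The triple `e(x₁, x₂, x₃, a)`. -/
def hedge (p : ℕ) (x1 x2 x3 a : ZMod p) : Set (ZMod p × ZMod p × ZMod p × ℕ) :=
  {(x1, x2 * x3 + a, x2 ^ 2 * x3 + a, 1),
   (x2, x3 * x1 + a, x3 ^ 2 * x1 + a, 2),
   (x3, x1 * x2 + a, x1 ^ 2 * x2 + a, 3)}

/-- The edge set of the hypergraph `H`. -/
def Hedges (p : ℕ) (S1 : Set (ZMod p)) : Set (Set (ZMod p × ZMod p × ZMod p × ℕ)) :=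
  {E | ∃ x1 x2 x3 a : ZMod p, x1 ∈ S1 ∧ x2 ∈ S1 ∧ x3 ∈ S1 ∧ a ≠ 0 ∧
    E = hedge p x1 x2 x3 a ∧
    E ⊆ Vpart p S1 1 ∪ Vpart p S1 2 ∪ Vpart p S1 3}

open Set

lemma mem_S2set_of_two_le_val {n : ℕ} {x : ZMod n} (hx : 2 ≤ x.val) : x ∈ S2set n := by
  refine ⟨?_, ?_⟩ <;> rintro rfl
  · simp at hx
  · have := Nat.mod_le 1 n
    rw [ZMod.val_one_eq_one_mod] at hx
    omega

lemma eq_and_eq_of_mul_add_eq_of_sq_mul_add_eq {R : Type*} [CommRing R] [NoZeroDivisors R]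
    {c x y a b : R} (hc0 : c ≠ 0) (hc1 : c ≠ 1)
    (h1 : c * x + a = c * y + b) (h2 : c ^ 2 * x + a = c ^ 2 * y + b) :
    x = y ∧ a = b := by
  have hprod : c * (c - 1) * (x - y) = 0 := by linear_combination h2 - h1
  have hxy : x = y := by
    simpa [hc0, sub_eq_zero, hc1] using hprod
  exact ⟨hxy, by linear_combination h1 - c * hxy⟩

section hedge

variable {p : ℕ} {x1 x2 x3 y1 y2 y3 a b : ZMod p}

lemma eq_of_mem_hedge_of_tag_eq {u v : ZMod p × ZMod p × ZMod p × ℕ}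
    (hu : u ∈ hedge p x1 x2 x3 a) (hv : v ∈ hedge p x1 x2 x3 a) (h : u.2.2.2 = v.2.2.2) :
    u = v := by
  simp only [hedge, mem_insert_iff, mem_singleton_iff] at hu hv
  rcases hu with rfl | rfl | rfl <;> rcases hv with rfl | rfl | rfl <;> simp_all

lemma mem_hedge_inter_hedge {u : ZMod p × ZMod p × ZMod p × ℕ}
    (hu : u ∈ hedge p x1 x2 x3 a ∩ hedge p y1 y2 y3 b) :
    (u.2.2.2 = 1 ∧ x1 = y1 ∧ x2 * x3 + a = y2 * y3 + b ∧ x2 ^ 2 * x3 + a = y2 ^ 2 * y3 + b) ∨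
    (u.2.2.2 = 2 ∧ x2 = y2 ∧ x3 * x1 + a = y3 * y1 + b ∧ x3 ^ 2 * x1 + a = y3 ^ 2 * y1 + b) ∨
    (u.2.2.2 = 3 ∧ x3 = y3 ∧ x1 * x2 + a = y1 * y2 + b ∧ x1 ^ 2 * x2 + a = y1 ^ 2 * y2 + b) := by
  obtain ⟨hx, hy⟩ := hu
  simp only [hedge, mem_insert_iff, mem_singleton_iff] at hx hy
  rcases hx with rfl | rfl | rfl <;> rcases hy with h | h | h <;> simp_all [Prod.ext_iff]

theorem hedge_params_eq_of_one_lt_encard_inter [Fact p.Prime]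
    (hx1 : x1 ∈ S2set p) (hx2 : x2 ∈ S2set p) (hx3 : x3 ∈ S2set p)
    (h : 1 < (hedge p x1 x2 x3 a ∩ hedge p y1 y2 y3 b).encard) :
    (x1, x2, x3, a) = (y1, y2, y3, b) := by
  obtain ⟨u, v, hu, hv, huv⟩ := one_lt_encard_iff.mp h
  have htag : u.2.2.2 ≠ v.2.2.2 := fun h => huv (eq_of_mem_hedge_of_tag_eq hu.1 hv.1 h)
  wlog hlt : u.2.2.2 < v.2.2.2 generalizing u v
  · exact this v u hv hu huv.symm htag.symm (htag.symm.lt_of_le (not_lt.mp hlt))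
  rcases mem_hedge_inter_hedge hu with ⟨hi, e1, e2, e3⟩ | ⟨hi, e1, e2, e3⟩ | ⟨hi, -⟩ <;>
    rcases mem_hedge_inter_hedge hv with ⟨hj, -⟩ | ⟨hj, f1, f2, f3⟩ | ⟨hj, f1, f2, f3⟩ <;>
    try omega
  · subst e1 f1
    obtain ⟨rfl, rfl⟩ := eq_and_eq_of_mul_add_eq_of_sq_mul_add_eq hx2.1 hx2.2 e2 e3
    rfl
  · subst e1 f1
    obtain ⟨rfl, rfl⟩ := eq_and_eq_of_mul_add_eq_of_sq_mul_add_eq hx1.1 hx1.2 f2 f3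
    rfl
  · subst e1 f1
    obtain ⟨rfl, rfl⟩ := eq_and_eq_of_mul_add_eq_of_sq_mul_add_eq hx3.1 hx3.2 e2 e3
    rfl

end hedge

theorem stmt_14 (p : ℕ) (hp : p.Prime) (S1 : Set (ZMod p)) (hS1 : S1Cond p S1) :
    (∀ x1 x2 x3 y1 y2 y3 : ZMod p, x1 ∈ S1 → x2 ∈ S1 → x3 ∈ S1 →
      y1 ∈ S1 → y2 ∈ S1 → y3 ∈ S1 → ∀ a b : ZMod p, a ≠ 0 → b ≠ 0 →
      2 ≤ (hedge p x1 x2 x3 a ∩ hedge p y1 y2 y3 b).encard →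
      (x1, x2, x3, a) = (y1, y2, y3, b) ∧
        hedge p x1 x2 x3 a = hedge p y1 y2 y3 b) ∧
    (∀ E1 ∈ Hedges p S1, ∀ E2 ∈ Hedges p S1, E1 ≠ E2 → (E1 ∩ E2).encard ≤ 1) := by
  have : Fact p.Prime := ⟨hp⟩
  have hS2 {x : ZMod p} (hx : x ∈ S1) : x ∈ S2set p :=
    mem_S2set_of_two_le_val (hS1 x hx).1.1
  refine ⟨fun x1 x2 x3 y1 y2 y3 hx1 hx2 hx3 _ _ _ a b _ _ h2 => ?_, ?_⟩
  · have key := hedge_params_eq_of_one_lt_encard_inter (hS2 hx1) (hS2 hx2) (hS2 hx3)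
      (lt_of_lt_of_le (by norm_num) h2)
    exact ⟨key, by cases key; rfl⟩
  · rintro _ ⟨x1, x2, x3, a, hx1, hx2, hx3, -, rfl, -⟩ _ ⟨y1, y2, y3, b, -, -, -, -, rfl, -⟩ hne
    by_contra h
    cases hedge_params_eq_of_one_lt_encard_inter (hS2 hx1) (hS2 hx2) (hS2 hx3) (not_le.mp h)
    exact hne rfl
end

section
/- There exists p₀ such that for every prime p ≥ p₀ the following holds: the hypergraph H contains no Berge 4-cycle of type (1,2,1,2), i.e., there do not exist pairwise distinct vertices v₁ ∈ V₁, v₂ ∈ V₂, v₃ ∈ V₁, v₄ ∈ V₂ and pairwise distinct edges e₁, e₂, e₃, e₄ of H such that {v₁,v₂} ⊆ e₁, {v₂,v₃} ⊆ e₂, {v₃,v₄} ⊆ e₃, and {v₄,v₁} ⊆ e₄. -/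
section Algebra

variable {R : Type*} [CommRing R] [IsDomain R]

theorem sq_sub_self_ne_zero {a : R} (h₀ : a ≠ 0) (h₁ : a ≠ 1) : a ^ 2 - a ≠ 0 := by
  simpa [sq, ← mul_sub_one] using ⟨h₀, sub_ne_zero.mpr h₁⟩

theorem mul_eq_mul_of_proportional {u v a b c d : R} (hu : u ≠ 0)
    (h₁ : u * a = v * b) (h₂ : u * c = v * d) : a * d = b * c := by
  refine mul_left_cancel₀ hu ?_
  linear_combination d * h₁ - b * h₂

theorem eq_or_eq_of_add_eq_add_of_mul_eq_mul {a b c d : R}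
    (hs : a + b = c + d) (hp : a * b = c * d) : c = a ∨ c = b := by
  have h : (c - a) * (c - b) = 0 := by linear_combination (-c) * hs + hp
  rcases mul_eq_zero.mp h with h | h
  · exact .inl (sub_eq_zero.mp h)
  · exact .inr (sub_eq_zero.mp h)

theorem add_eq_add_of_mul_eq_mul_of_sq_sub_mul_eq {z₁ z₂ z₃ z₄ : R} (hz₁ : z₁ ≠ 0) (hz₃ : z₃ ≠ 0)
    (hp : z₁ * z₃ = z₂ * z₄) (hq : (z₁ ^ 2 - z₁) * (z₃ ^ 2 - z₃) = (z₂ ^ 2 - z₂) * (z₄ ^ 2 - z₄)) :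
    z₁ + z₃ = z₂ + z₄ := by
  refine mul_left_cancel₀ (mul_ne_zero hz₁ hz₃) ?_
  linear_combination -hq + (z₁ * z₃ + z₂ * z₄ + 1 - z₂ - z₄) * hp

/-- `h₁`–`h₄'` say that the edges `e(x₁,y₁,z₁,a₁)`, `e(x₂,y₁,z₂,a₂)`, `e(x₂,y₃,z₃,a₃)`, `e(x₁,y₃,z₄,a₄)`
share, cyclically, vertices of `V₁`, `V₂`, `V₁`, `V₂`. -/
theorem berge_cycle_params_eq_or_eq {x₁ x₂ y₁ y₃ z₁ z₂ z₃ z₄ a₁ a₂ a₃ a₄ : R}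
    (hx₁ : x₁ ≠ 0) (hy₀ : y₁ ≠ 0) (hy₁ : y₁ ≠ 1) (hz₀ : z₁ ≠ 0) (hz₁ : z₁ ≠ 1) (hz₃ : z₃ ≠ 0)
    (h₁ : y₁ * z₁ + a₁ = y₃ * z₄ + a₄) (h₁' : y₁ ^ 2 * z₁ + a₁ = y₃ ^ 2 * z₄ + a₄)
    (h₂ : z₁ * x₁ + a₁ = z₂ * x₂ + a₂) (h₂' : z₁ ^ 2 * x₁ + a₁ = z₂ ^ 2 * x₂ + a₂)
    (h₃ : y₁ * z₂ + a₂ = y₃ * z₃ + a₃) (h₃' : y₁ ^ 2 * z₂ + a₂ = y₃ ^ 2 * z₃ + a₃)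
    (h₄ : z₃ * x₂ + a₃ = z₄ * x₁ + a₄) (h₄' : z₃ ^ 2 * x₂ + a₃ = z₄ ^ 2 * x₁ + a₄) :
    (x₁ = x₂ ∧ z₁ = z₂ ∧ a₁ = a₂) ∨ (y₁ = y₃ ∧ z₂ = z₃ ∧ a₂ = a₃) := by
  have hy : y₁ ^ 2 - y₁ ≠ 0 := sq_sub_self_ne_zero hy₀ hy₁
  have hv₁ : (y₁ ^ 2 - y₁) * z₁ = (y₃ ^ 2 - y₃) * z₄ := by linear_combination h₁' - h₁
  have hv₂ : x₁ * (z₁ ^ 2 - z₁) = x₂ * (z₂ ^ 2 - z₂) := by linear_combination h₂' - h₂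
  have hv₃ : (y₁ ^ 2 - y₁) * z₂ = (y₃ ^ 2 - y₃) * z₃ := by linear_combination h₃' - h₃
  have hv₄ : x₁ * (z₄ ^ 2 - z₄) = x₂ * (z₃ ^ 2 - z₃) := by linear_combination h₄ - h₄'
  have hprod : z₁ * z₃ = z₂ * z₄ := (mul_eq_mul_of_proportional hy hv₁ hv₃).trans (mul_comm _ _)
  have hsum := add_eq_add_of_mul_eq_mul_of_sq_sub_mul_eq hz₀ hz₃ hprod
    (mul_eq_mul_of_proportional hx₁ hv₂ hv₄)
  have first_params_eq : z₂ = z₁ → x₁ = x₂ ∧ z₁ = z₂ ∧ a₁ = a₂ := by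
    rintro rfl
    have hz : z₂ ^ 2 - z₂ ≠ 0 := sq_sub_self_ne_zero hz₀ hz₁
    have hx : x₁ = x₂ := mul_right_cancel₀ hz hv₂
    subst hx
    exact ⟨rfl, rfl, add_left_cancel h₂⟩
  rcases eq_or_eq_of_add_eq_add_of_mul_eq_mul hsum hprod with hz₂ | hz₂
  · exact .inl (first_params_eq hz₂)
  subst hz₂
  by_cases hy₃ : y₁ = y₃
  · subst hy₃
    exact .inr ⟨rfl, rfl, add_left_cancel h₃⟩
  obtain rfl : z₁ = z₄ := by linear_combination hsum
  have hz : (y₁ - y₃) * (z₁ - z₂) = 0 := by linear_combination h₁ - h₃ - h₂ - h₄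
  have hz₁₂ : z₁ = z₂ := sub_eq_zero.mp ((mul_eq_zero.mp hz).resolve_left (sub_ne_zero.mpr hy₃))
  exact .inl (first_params_eq hz₁₂.symm)

end Algebra

section Hypergraph

variable {p : ℕ} {x₁ x₂ x₃ a : ZMod p} {v : ZMod p × ZMod p × ZMod p × ℕ}

theorem S1Cond.subset_S2set {S1 : Set (ZMod p)} (h : S1Cond p S1) : S1 ⊆ S2set p := by
  intro x hx
  have h2 := (h x hx).1.1
  refine ⟨?_, ?_⟩ <;> rintro rfl
  · simp at h2
  · have := ZMod.val_one_eq_one_mod p ▸ Nat.mod_le 1 p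
    omega

theorem eq_of_mem_hedge_of_tag_eq_one (h : v ∈ hedge p x₁ x₂ x₃ a) (ht : v.2.2.2 = 1) :
    v = (x₁, x₂ * x₃ + a, x₂ ^ 2 * x₃ + a, 1) := by
  rcases h with rfl | rfl | rfl <;> simp_all

theorem eq_of_mem_hedge_of_tag_eq_two (h : v ∈ hedge p x₁ x₂ x₃ a) (ht : v.2.2.2 = 2) :
    v = (x₂, x₃ * x₁ + a, x₃ ^ 2 * x₁ + a, 2) := by
  rcases h with rfl | rfl | rfl <;> simp_all

theorem params_eq_of_mem_hedge_of_tag_eq_one {x₁' x₂' x₃' a' : ZMod p}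
    (h : v ∈ hedge p x₁ x₂ x₃ a) (h' : v ∈ hedge p x₁' x₂' x₃' a') (ht : v.2.2.2 = 1) :
    x₁ = x₁' ∧ x₂ * x₃ + a = x₂' * x₃' + a' ∧ x₂ ^ 2 * x₃ + a = x₂' ^ 2 * x₃' + a' := by
  simpa using (eq_of_mem_hedge_of_tag_eq_one h ht).symm.trans (eq_of_mem_hedge_of_tag_eq_one h' ht)

theorem params_eq_of_mem_hedge_of_tag_eq_two {x₁' x₂' x₃' a' : ZMod p}
    (h : v ∈ hedge p x₁ x₂ x₃ a) (h' : v ∈ hedge p x₁' x₂' x₃' a') (ht : v.2.2.2 = 2) :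
    x₂ = x₂' ∧ x₃ * x₁ + a = x₃' * x₁' + a' ∧ x₃ ^ 2 * x₁ + a = x₃' ^ 2 * x₁' + a' := by
  simpa using (eq_of_mem_hedge_of_tag_eq_two h ht).symm.trans (eq_of_mem_hedge_of_tag_eq_two h' ht)

end Hypergraph

theorem stmt_15 :
    ∃ p0 : ℕ, ∀ p : ℕ, p.Prime → p0 ≤ p →
      ∀ S1 : Set (ZMod p), S1Cond p S1 →
        ¬ ∃ (v1 v2 v3 v4 : ZMod p × ZMod p × ZMod p × ℕ)
            (e1 e2 e3 e4 : Set (ZMod p × ZMod p × ZMod p × ℕ)),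
          v1 ∈ Vpart p S1 1 ∧ v2 ∈ Vpart p S1 2 ∧
          v3 ∈ Vpart p S1 1 ∧ v4 ∈ Vpart p S1 2 ∧
          [v1, v2, v3, v4].Pairwise (· ≠ ·) ∧
          [e1, e2, e3, e4].Pairwise (· ≠ ·) ∧
          e1 ∈ Hedges p S1 ∧ e2 ∈ Hedges p S1 ∧
          e3 ∈ Hedges p S1 ∧ e4 ∈ Hedges p S1 ∧
          {v1, v2} ⊆ e1 ∧ {v2, v3} ⊆ e2 ∧ {v3, v4} ⊆ e3 ∧ {v4, v1} ⊆ e4 := by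
  refine ⟨0, fun p hp _ S1 hS1 => ?_⟩
  have : Fact p.Prime := ⟨hp⟩
  rintro ⟨v1, v2, v3, v4, -, -, -, -, hv1, hv2, hv3, hv4, -, hne,
    ⟨x₁, y₁, z₁, a₁, hx₁, hy₁, hz₁, -, rfl, -⟩, ⟨x₂, y₂, z₂, a₂, -, -, -, -, rfl, -⟩,
    ⟨x₃, y₃, z₃, a₃, -, -, hz₃, -, rfl, -⟩, ⟨x₄, y₄, z₄, a₄, -, -, -, -, rfl, -⟩, h₁, h₂, h₃, h₄⟩
  obtain ⟨rfl, hv₁, hv₁'⟩ :=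
    params_eq_of_mem_hedge_of_tag_eq_one (h₁ (by simp)) (h₄ (by simp)) hv1.2.2.2
  obtain ⟨rfl, hv₂, hv₂'⟩ :=
    params_eq_of_mem_hedge_of_tag_eq_two (h₁ (by simp)) (h₂ (by simp)) hv2.2.2.2
  obtain ⟨rfl, hv₃, hv₃'⟩ :=
    params_eq_of_mem_hedge_of_tag_eq_one (h₂ (by simp)) (h₃ (by simp)) hv3.2.2.2
  obtain ⟨rfl, hv₄, hv₄'⟩ :=
    params_eq_of_mem_hedge_of_tag_eq_two (h₃ (by simp)) (h₄ (by simp)) hv4.2.2.2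
  obtain ⟨hx₁₀, -⟩ := hS1.subset_S2set hx₁
  obtain ⟨hy₁₀, hy₁₁⟩ := hS1.subset_S2set hy₁
  obtain ⟨hz₁₀, hz₁₁⟩ := hS1.subset_S2set hz₁
  obtain ⟨hz₃₀, -⟩ := hS1.subset_S2set hz₃
  rcases berge_cycle_params_eq_or_eq hx₁₀ hy₁₀ hy₁₁ hz₁₀ hz₁₁ hz₃₀ hv₁ hv₁' hv₂ hv₂' hv₃ hv₃'
    hv₄ hv₄' with ⟨rfl, rfl, rfl⟩ | ⟨rfl, rfl, rfl⟩ <;> simp at hne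
end
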